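/- arXiv:2101.00361 — 6 statements merged into one kernel-verified Lean document; each statement's English description precedes it below -/
import Mathlib

section
/- (Correctness of intermediate trend counts, Equation 2, supporting Theorem 3.1.) Suppose count : Fin n → ℕ satisfies the trend-count recurrence: for every v : Fin n, count v = (if v ∈ S then 1 else 0) + ∑ over u : Fin n with E u v of count u. Then for every v : Fin n, count v equals the number of event trends ending at v, i.e. count v = Set.ncard {l : List (Fin n) | l ≠ [] ∧ l.Chain' E ∧ (the first element of l belongs to S) ∧ l.getLast? = some v}. -/
/-!
Removing its last event splits a trend ending at `v` into either `[v]` (when `v ∈ S`) or a trend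
ending at some `E`-predecessor `u` of `v`, followed by `v`; different `u` give disjoint families.
Hence the numbers of trends satisfy the same recurrence as `count`, and this recurrence has a
unique solution because `E` is well-founded. Counting with `encard` in `ℕ∞` makes the recurrence
hold without knowing finiteness in advance; finiteness then follows from the equality with `count`.
-/

open Finset

theorem WellFounded.eq_of_sum_recurrence {α M : Type*} [Fintype α] [AddCommMonoid M]
    {E : α → α → Prop} [DecidableRel E] (hwf : WellFounded E) (a : α → M) {f g : α → M}
    (hf : ∀ v, f v = a v + ∑ u ∈ univ.filter (E · v), f u)
    (hg : ∀ v, g v = a v + ∑ u ∈ univ.filter (E · v), g u) : f = g :=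
  funext fun v => hwf.induction (C := fun v => f v = g v) v fun v ih => by
    rw [hf, hg, sum_congr rfl fun u hu => ih u (mem_filter.1 hu).2]

namespace EventTrend

variable {α : Type*} (E : α → α → Prop) (S : Finset α)

def trendsTo (v : α) : Set (List α) :=
  {l | l ≠ [] ∧ l.IsChain E ∧ (∃ x ∈ S, l.head? = some x) ∧ l.getLast? = some v}

variable {E S}

theorem singleton_mem_trendsTo {v : α} : [v] ∈ trendsTo E S v ↔ v ∈ S := by
  simp [trendsTo]

theorem append_singleton_mem_trendsTo {l : List α} {v : α} (hl : l ≠ []) :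
    l ++ [v] ∈ trendsTo E S v ↔ ∃ u, E u v ∧ l ∈ trendsTo E S u := by
  obtain ⟨l, u, rfl⟩ := (List.eq_nil_or_concat l).resolve_left hl
  simp [trendsTo, List.isChain_append, and_comm, and_left_comm, and_assoc]

theorem eq_append_singleton_of_mem_trendsTo {l : List α} {v : α} (hl : l ∈ trendsTo E S v) :
    ∃ l', l = l' ++ [v] := by
  obtain ⟨-, -, -, hlast⟩ := hl
  exact ⟨l.dropLast, (List.dropLast_append_getLast? _ hlast).symm⟩

theorem trendsTo_eq [Fintype α] [DecidableRel E] (v : α) :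
    trendsTo E S v = {l | v ∈ S ∧ l = [v]} ∪
      ⋃ u ∈ univ.filter (E · v), (· ++ [v]) '' trendsTo E S u := by
  ext l
  constructor
  · intro hl
    obtain ⟨l', rfl⟩ := eq_append_singleton_of_mem_trendsTo hl
    rcases eq_or_ne l' [] with rfl | hl'
    · exact Or.inl ⟨singleton_mem_trendsTo.1 hl, rfl⟩
    · obtain ⟨u, huv, hu⟩ := (append_singleton_mem_trendsTo hl').1 hl
      exact Or.inr (Set.mem_biUnion (by simpa using huv) ⟨l', hu, rfl⟩)
  · rintro (⟨hv, rfl⟩ | hl)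
    · exact singleton_mem_trendsTo.2 hv
    · simp only [Set.mem_iUnion, Set.mem_image, mem_filter, mem_univ, true_and] at hl
      obtain ⟨u, huv, l', hl', rfl⟩ := hl
      exact (append_singleton_mem_trendsTo hl'.1).2 ⟨u, huv, hl'⟩

theorem disjoint_trendsTo {u v : α} (h : u ≠ v) : Disjoint (trendsTo E S u) (trendsTo E S v) :=
  Set.disjoint_left.2 fun _ hu hv => h (Option.some_injective _ (hu.2.2.2.symm.trans hv.2.2.2))

theorem encard_trendsTo [Fintype α] [DecidableEq α] [DecidableRel E] (v : α) :
    (trendsTo E S v).encard =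
      (if v ∈ S then 1 else 0) + ∑ u ∈ univ.filter (E · v), (trendsTo E S u).encard := by
  have happend : Function.Injective (· ++ [v]) := List.append_left_injective [v]
  have hdisj : Disjoint {l | v ∈ S ∧ l = [v]}
      (⋃ u ∈ univ.filter (E · v), (· ++ [v]) '' trendsTo E S u) := by
    refine Set.disjoint_left.2 ?_
    rintro _ ⟨-, rfl⟩ h
    simp [trendsTo] at h
  have hpair : (↑(univ.filter (E · v)) : Set α).PairwiseDisjoint
      fun u => (· ++ [v]) '' trendsTo E S u := fun u _ u' _ huu' =>
    (Set.disjoint_image_iff happend).2 (disjoint_trendsTo huu')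
  rw [trendsTo_eq, Set.encard_union_eq hdisj, ← Finset.set_biUnion_coe,
    Set.Finite.encard_biUnion (Set.toFinite _) hpair, finsum_mem_coe_finset]
  congr 1
  · by_cases hv : v ∈ S <;> simp [hv]
  · simp_rw [happend.encard_image]

end EventTrend

/-- Correctness of intermediate trend counts (Equation 2, supporting Theorem 3.1):
if `count` satisfies the trend-count recurrence, then `count v` is the number of
event trends ending at `v`. -/
theorem intermediate_trend_count_correct
    (n : ℕ) (E : Fin n → Fin n → Prop) [DecidableRel E]
    (hE : ∀ u v, E u v → u < v)
    (S : Finset (Fin n)) (count : Fin n → ℕ)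
    (hcount : ∀ v, count v =
      (if v ∈ S then 1 else 0) +
        ∑ u ∈ Finset.univ.filter (fun u => E u v), count u) :
    ∀ v : Fin n, count v =
      Set.ncard {l : List (Fin n) |
        l ≠ [] ∧ l.Chain' E ∧ (∃ x ∈ S, l.head? = some x) ∧ l.getLast? = some v} := by
  have hwf : WellFounded E := Subrelation.wf (hE _ _) wellFounded_lt
  have hcount' : ∀ v, (count v : ℕ∞) =
      (if v ∈ S then 1 else 0) + ∑ u ∈ univ.filter (E · v), (count u : ℕ∞) := fun v => by
    exact_mod_cast hcount v
  intro v
  have hencard := congrFun (hwf.eq_of_sum_recurrence _ hcount' EventTrend.encard_trendsTo) v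
  change count v = (EventTrend.trendsTo E S v).ncard
  rw [Set.ncard_def, ← hencard, ENat.toNat_natCast]
end

section
/- (Correctness of the final trend count, Equation 3, supporting Theorem 3.1.) Suppose count : Fin n → ℕ satisfies the trend-count recurrence: for every v : Fin n, count v = (if v ∈ S then 1 else 0) + ∑ over u : Fin n with E u v of count u. Then ∑ over v ∈ F of count v equals the total number of event trends of the query, i.e. it equals Set.ncard {l : List (Fin n) | l ≠ [] ∧ l.Chain' E ∧ (the first element of l belongs to S) ∧ (the last element of l belongs to F)}. -/
/-!
A trend ending at `v` is either `[v]` (when `v ∈ S`) or a trend ending at some `u` with `E u v`,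
extended by `v`. These cases are disjoint and appending `v` is injective, so the number of trends
ending at `v` satisfies the same recurrence as `count`, and well-founded induction along `E`
identifies the two. Trends are told apart by their last event, so summing over `F` counts every
trend exactly once.
-/

open Set

variable {α : Type*} (E : α → α → Prop) (S : Finset α)

def trendsTo (v : α) : Set (List α) :=
  {l | l ≠ [] ∧ l.IsChain E ∧ (∃ x ∈ S, l.head? = some x) ∧ l.getLast? = some v}

variable {E S}

theorem disjoint_trendsTo {u v : α} (h : u ≠ v) : Disjoint (trendsTo E S u) (trendsTo E S v) :=
  disjoint_left.2 fun _ hu hv ↦ h (Option.some_injective _ (hu.2.2.2.symm.trans hv.2.2.2))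

theorem append_singleton_mem_trendsTo_iff {l : List α} {v : α} :
    l ++ [v] ∈ trendsTo E S v ↔ (l = [] ∧ v ∈ S) ∨ ∃ u, E u v ∧ l ∈ trendsTo E S u := by
  rcases l.eq_nil_or_concat with rfl | ⟨l, u, rfl⟩
  · simp [trendsTo]
  · simp only [trendsTo, mem_ofPred_eq, List.isChain_append]
    grind

variable (E S)

theorem trendsTo_eq [DecidableEq α] (v : α) :
    trendsTo E S v =
      (if v ∈ S then {[v]} else ∅) ∪ ⋃ u ∈ {u | E u v}, (· ++ [v]) '' trendsTo E S u := by
  ext l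
  constructor
  · intro hl
    obtain ⟨l, rfl⟩ := List.getLast?_eq_some_iff.1 hl.2.2.2
    rcases append_singleton_mem_trendsTo_iff.1 hl with ⟨rfl, hv⟩ | ⟨u, huv, hlu⟩
    · simp [hv]
    · exact Or.inr (mem_biUnion huv (mem_image_of_mem _ hlu))
  · rintro (hl | hl)
    · split_ifs at hl with hv
      · rw [mem_singleton_iff.1 hl]
        exact append_singleton_mem_trendsTo_iff (l := []) |>.2 (Or.inl ⟨rfl, hv⟩)
      · exact absurd hl (notMem_empty l)
    · obtain ⟨u, huv, l, hlu, rfl⟩ := by simpa using hl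
      exact append_singleton_mem_trendsTo_iff.2 (Or.inr ⟨u, huv, hlu⟩)

theorem encard_trendsTo [Fintype α] [DecidableEq α] [DecidableRel E] (hE : WellFounded E)
    (count : α → ℕ)
    (hcount : ∀ v, count v =
      (if v ∈ S then 1 else 0) + ∑ u ∈ Finset.univ.filter (fun u => E u v), count u)
    (v : α) : (trendsTo E S v).encard = count v := by
  induction v using hE.induction with
  | _ v ih =>
  have happend : Function.Injective (· ++ [v]) := fun _ _ ↦ List.append_cancel_right
  have hdisj : Disjoint (if v ∈ S then {[v]} else ∅ : Set (List α))
      (⋃ u ∈ {u | E u v}, (· ++ [v]) '' trendsTo E S u) := by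
    have hsingle : (if v ∈ S then {[v]} else ∅ : Set (List α)) ⊆ {[v]} := by split_ifs <;> simp
    refine Disjoint.mono_left hsingle (disjoint_singleton_left.2 fun h ↦ ?_)
    obtain ⟨u, -, l, hl, hlv⟩ := mem_iUnion₂.1 h
    exact hl.1 (by simpa using hlv)
  have hpair : {u | E u v}.PairwiseDisjoint fun u ↦ (· ++ [v]) '' trendsTo E S u :=
    fun _ _ _ _ h ↦ (disjoint_image_iff happend).2 (disjoint_trendsTo h)
  rw [trendsTo_eq, encard_union_eq hdisj, (toFinite _).encard_biUnion hpair, hcount v,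
    Nat.cast_add, Nat.cast_sum, ← finsum_mem_coe_finset, Finset.coe_filter_univ]
  congr 1
  · split_ifs <;> simp
  · exact finsum_mem_congr rfl fun u hu ↦ by rw [happend.encard_image, ih u hu]

theorem ncard_biUnion_trendsTo [Fintype α] [DecidableEq α] [DecidableRel E] (hE : WellFounded E)
    (count : α → ℕ)
    (hcount : ∀ v, count v =
      (if v ∈ S then 1 else 0) + ∑ u ∈ Finset.univ.filter (fun u => E u v), count u)
    (F : Finset α) : (⋃ y ∈ (F : Set α), trendsTo E S y).ncard = ∑ y ∈ F, count y := by
  rw [ncard_def, F.finite_toSet.encard_biUnion fun _ _ _ _ h ↦ disjoint_trendsTo h,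
    finsum_mem_coe_finset]
  simp only [encard_trendsTo E S hE count hcount, ← Nat.cast_sum, ENat.toNat_natCast]

/-- Correctness of the final trend count (Equation 3, supporting Theorem 3.1):
if `count` satisfies the trend-count recurrence, then the sum of `count` over the
events of end type equals the total number of event trends of the query. -/
theorem final_trend_count_correct
    (n : ℕ) (E : Fin n → Fin n → Prop) [DecidableRel E]
    (hE : ∀ u v, E u v → u < v)
    (S F : Finset (Fin n)) (count : Fin n → ℕ)
    (hcount : ∀ v, count v =
      (if v ∈ S then 1 else 0) +
        ∑ u ∈ Finset.univ.filter (fun u => E u v), count u) :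
    ∑ v ∈ F, count v =
      Set.ncard {l : List (Fin n) |
        l ≠ [] ∧ l.Chain' E ∧ (∃ x ∈ S, l.head? = some x) ∧
          (∃ y ∈ F, l.getLast? = some y)} := by
  rw [← ncard_biUnion_trendsTo E S (wellFounded_lt.mono hE) count hcount F]
  congr 1
  ext l
  simp only [mem_iUnion₂, Finset.mem_coe, trendsTo, mem_ofPred_eq, exists_prop]
  exact ⟨fun ⟨y, hy, h₁, h₂, h₃, h₄⟩ ↦ ⟨h₁, h₂, h₃, y, hy, h₄⟩,
    fun ⟨h₁, h₂, h₃, y, hy, h₄⟩ ↦ ⟨y, hy, h₁, h₂, h₃, h₄⟩⟩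
end

section
/- (Theorem 4.1, snapshot-driven pruning: it is always beneficial to share the execution of a query that introduces no new snapshots.) Let b, n, g, p, s_c, s_p, k_s, k_n be real numbers with 0 ≤ p, 0 ≤ n, 1 ≤ g, 0 ≤ s_c ≤ b, 1 ≤ k_s, 0 ≤ k_n, and g * p ≤ Real.logb 2 g + n. Then Shared(k_s) + NonShared(k_n) ≤ Shared'(k_s − 1) + NonShared(k_n + 1), i.e. k_s * (s_c * g * p) + b * (Real.logb 2 g + n * s_p) + k_n * (b * (Real.logb 2 g + n)) ≤ (k_s − 1) * (s_c * g * p) + b * (Real.logb 2 g + n * s_p) + (k_n + 1) * (b * (Real.logb 2 g + n)). Hence removing from the shared set a query q that introduces no new snapshots (so that s_c and s_p are unchanged) can never decrease the total cost. -/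
/-- Theorem 4.1 (snapshot-driven pruning): it is always beneficial to share the
execution of a query that introduces no new snapshots. Removing such a query `q`
from the shared set (so that `s_c` and `s_p` are unchanged) can never decrease
the total cost. -/
theorem snapshot_driven_pruning
    (b n g p s_c s_p k_s k_n : ℝ)
    (hp : 0 ≤ p) (hn : 0 ≤ n) (hg : 1 ≤ g)
    (hsc0 : 0 ≤ s_c) (hscb : s_c ≤ b)
    (hks : 1 ≤ k_s) (hkn : 0 ≤ k_n)
    (hneg : g * p ≤ Real.logb 2 g + n) :
    k_s * (s_c * g * p) + b * (Real.logb 2 g + n * s_p)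
      + k_n * (b * (Real.logb 2 g + n))
    ≤ (k_s - 1) * (s_c * g * p) + b * (Real.logb 2 g + n * s_p)
      + (k_n + 1) * (b * (Real.logb 2 g + n)) := by
  have hgp : 0 ≤ g * p := mul_nonneg (by linarith) hp
  nlinarith [mul_le_mul_of_nonneg_left hneg (le_trans hsc0 hscb),
    mul_le_mul_of_nonneg_right hscb hgp]
end

section
/- (Theorem 4.2, benefit-driven pruning.) Let b, n, g, p, s_p, s_p', s_c, s_c' be real numbers with 0 ≤ g, 0 ≤ p, and 0 ≤ s_c' ≤ s_c, and let k_s, k_n : ℕ with 1 ≤ k_s; set k = k_s + k_n and L = Real.logb 2 g. Write Sh(j) = s_c * j * g * p + b * (L + n * s_p) for the shared cost when query q is in the shared set of j queries, Sh'(j) = s_c' * j * g * p + b * (L + n * s_p') for the shared cost when q is removed (removing q cannot increase the number of created snapshots, whence s_c' ≤ s_c), and N(j) = j * (b * (L + n)) for the non-shared cost of j queries. If Sh(k) ≤ Sh'(k − 1) + N(1), then Sh(k_s) + N(k_n) ≤ Sh'(k_s − 1) + N(k_n + 1). That is, if sharing q with the whole workload is beneficial, then in any plan that shares a subset Q_E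 ∋ q and processes the rest separately, moving q out of the shared set cannot decrease the cost. -/
/-- Theorem 4.2 (benefit-driven pruning): if sharing the query `q` with the whole
workload of `k = k_s + k_n` queries is beneficial, then in any plan that shares a
subset `Q_E ∋ q` of `k_s` queries and processes the remaining `k_n` queries
separately, moving `q` out of the shared set cannot decrease the cost. -/
theorem benefit_driven_pruning
    (b n g p s_p s_p' s_c s_c' : ℝ)
    (hg : 0 ≤ g) (hp : 0 ≤ p)
    (hsc'0 : 0 ≤ s_c') (hsc : s_c' ≤ s_c)
    (k_s k_n : ℕ) (hks : 1 ≤ k_s)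
    (h : s_c * ((k_s + k_n : ℕ) : ℝ) * g * p + b * (Real.logb 2 g + n * s_p)
        ≤ s_c' * (((k_s + k_n : ℕ) : ℝ) - 1) * g * p + b * (Real.logb 2 g + n * s_p')
          + 1 * (b * (Real.logb 2 g + n))) :
    s_c * (k_s : ℝ) * g * p + b * (Real.logb 2 g + n * s_p)
      + (k_n : ℝ) * (b * (Real.logb 2 g + n))
    ≤ s_c' * ((k_s : ℝ) - 1) * g * p + b * (Real.logb 2 g + n * s_p')
      + ((k_n : ℝ) + 1) * (b * (Real.logb 2 g + n)) := by
  push_cast at h ⊢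
  nlinarith [mul_nonneg (mul_nonneg (mul_nonneg (sub_nonneg.2 hsc) (Nat.cast_nonneg (α := ℝ) k_n)) hg) hp]
end

section
/- (Theorem 4.2, reverse direction of benefit-driven pruning.) Let b, n, g, p, s_p, s_p', s_c, s_c' be real numbers with 0 ≤ g, 0 ≤ p, and 0 ≤ s_c ≤ s_c', and let k_s, k_n : ℕ with 1 ≤ k_s; set k = k_s + k_n and L = Real.logb 2 g. Write Sh(j) = s_c * j * g * p + b * (L + n * s_p), Sh'(j) = s_c' * j * g * p + b * (L + n * s_p'), and N(j) = j * (b * (L + n)). If Sh(k) ≥ Sh'(k − 1) + N(1), then Sh(k_s) + N(k_n) ≥ Sh'(k_s − 1) + N(k_n + 1). That is, if sharing q with the whole workload is not beneficial, then in any plan that shares a subset Q_E ∋ q, moving q out of the shared set cannot increase the cost. -/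
/-- Theorem 4.2, reverse direction of benefit-driven pruning: if sharing the query
`q` with the whole workload of `k = k_s + k_n` queries is not beneficial, then in
any plan that shares a subset `Q_E ∋ q` of `k_s` queries, moving `q` out of the
shared set cannot increase the cost. -/
theorem benefit_driven_pruning_reverse
    (b n g p s_p s_p' s_c s_c' : ℝ)
    (hg : 0 ≤ g) (hp : 0 ≤ p)
    (hsc0 : 0 ≤ s_c) (hsc : s_c ≤ s_c')
    (k_s k_n : ℕ) (hks : 1 ≤ k_s)
    (h : s_c * ((k_s + k_n : ℕ) : ℝ) * g * p + b * (Real.logb 2 g + n * s_p)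
        ≥ s_c' * (((k_s + k_n : ℕ) : ℝ) - 1) * g * p + b * (Real.logb 2 g + n * s_p')
          + 1 * (b * (Real.logb 2 g + n))) :
    s_c * (k_s : ℝ) * g * p + b * (Real.logb 2 g + n * s_p)
      + (k_n : ℝ) * (b * (Real.logb 2 g + n))
    ≥ s_c' * ((k_s : ℝ) - 1) * g * p + b * (Real.logb 2 g + n * s_p')
      + ((k_n : ℝ) + 1) * (b * (Real.logb 2 g + n)) := by
  push_cast at h ⊢
  nlinarith [mul_nonneg (mul_nonneg (mul_nonneg (sub_nonneg.2 hsc) (Nat.cast_nonneg k_n : (0:ℝ) ≤ k_n)) hg) hp]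
end

section
/- (Correctness of the conjunctive-pattern trend count, Section 5.) Let α be a type with decidable equality and A B : Finset α be the finite sets of trends matched by patterns P₁ and P₂ respectively. Let C₁₂ = (A ∩ B).card, C₁ = A.card − C₁₂ = (A \ B).card, and C₂ = B.card − C₁₂ = (B \ A).card. Then the number of unordered pairs {t₁, t₂} of distinct trends such that one of them belongs to A and the other belongs to B — i.e. the cardinality of the Finset of 2-element subsets s of A ∪ B for which there exist x ∈ s and y ∈ s with x ≠ y, x ∈ A and y ∈ B — equals C₁ * C₂ + C₁ * C₁₂ + C₂ * C₁₂ + Nat.choose C₁₂ 2. -/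
lemma choose_two_succ (n : ℕ) : (n + 1).choose 2 = n.choose 2 + n := by
  rw [show (n+1).choose 2 = n.choose 1 + n.choose 2 from rfl, Nat.choose_one_right]
  omega

lemma choose_two_add (m n : ℕ) :
    (m + n).choose 2 = m.choose 2 + n.choose 2 + m * n := by
  induction n with
  | zero => simp
  | succ k ih =>
      rw [show m + (k+1) = (m+k) + 1 from rfl, choose_two_succ, choose_two_succ, ih]
      ring

/-- Correctness of the conjunctive-pattern trend count (Section 5): with
`C₁₂ = |A ∩ B|`, `C₁ = |A \ B|`, `C₂ = |B \ A|`, the number of unordered pairs of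
distinct trends, one matched by `P₁` and the other by `P₂`, equals
`C₁·C₂ + C₁·C₁₂ + C₂·C₁₂ + (C₁₂ choose 2)`. -/
theorem conjunctive_pattern_count
    (α : Type*) [DecidableEq α] (A B : Finset α) :
    (((A ∪ B).powersetCard 2).filter
        (fun s => ∃ x ∈ s, ∃ y ∈ s, x ≠ y ∧ x ∈ A ∧ y ∈ B)).card
      = (A \ B).card * (B \ A).card
        + (A \ B).card * (A ∩ B).card
        + (B \ A).card * (A ∩ B).card
        + Nat.choose (A ∩ B).card 2 := by
  classical
  set P : Finset α → Prop := fun s => ∃ x ∈ s, ∃ y ∈ s, x ≠ y ∧ x ∈ A ∧ y ∈ B with hP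
  -- the complement filter is the 2-subsets of A \ B together with those of B \ A
  have hneg : ((A ∪ B).powersetCard 2).filter (fun s => ¬ P s)
      = (A \ B).powersetCard 2 ∪ (B \ A).powersetCard 2 := by
    ext s
    simp only [Finset.mem_filter, Finset.mem_powersetCard, Finset.mem_union, hP]
    constructor
    · rintro ⟨⟨hsub, hcard⟩, hnp⟩
      by_cases h1 : s ⊆ A \ B
      · exact Or.inl ⟨h1, hcard⟩
      · right
        refine ⟨fun x hx => ?_, hcard⟩
        -- first: no element of s is in A ∩ B
        have hnoint : ∀ z ∈ s, z ∉ A ∨ z ∉ B := by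
          intro z hz
          by_contra hc
          push_neg at hc
          obtain ⟨w, hw, hwz⟩ :=
            Finset.exists_mem_ne (by omega : 1 < s.card) z
          rcases Finset.mem_union.mp (hsub hw) with hwA | hwB
          · exact hnp ⟨w, hw, z, hz, hwz, hwA, hc.2⟩
          · exact hnp ⟨z, hz, w, hw, fun he => hwz he.symm, hc.1, hwB⟩
        -- every element is in A \ B or B \ A
        have hside : ∀ z ∈ s, z ∈ A \ B ∨ z ∈ B \ A := by
          intro z hz
          rcases Finset.mem_union.mp (hsub hz) with hA | hB
          · rcases hnoint z hz with h | h
            · exact absurd hA h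
            · exact Or.inl (Finset.mem_sdiff.mpr ⟨hA, h⟩)
          · rcases hnoint z hz with h | h
            · exact Or.inr (Finset.mem_sdiff.mpr ⟨hB, h⟩)
            · exact absurd hB h
        rcases hside x hx with hxa | hxb
        · -- x ∈ A \ B; since s ⊄ A \ B, some other y ∈ B \ A, contradiction with hnp
          exfalso
          obtain ⟨y, hy, hyn⟩ := Finset.not_subset.mp h1
          rcases hside y hy with h | h
          · exact hyn h
          · have hxy : x ≠ y := by
              intro he; rw [he] at hxa; exact (Finset.mem_sdiff.mp h).2 (Finset.mem_sdiff.mp hxa).1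
            exact hnp ⟨x, hx, y, hy, hxy, (Finset.mem_sdiff.mp hxa).1, (Finset.mem_sdiff.mp h).1⟩
        · exact hxb
    · rintro (⟨hsub, hcard⟩ | ⟨hsub, hcard⟩)
      · refine ⟨⟨fun z hz => Finset.mem_union.mpr (Or.inl (Finset.mem_sdiff.mp (hsub hz)).1), hcard⟩, ?_⟩
        rintro ⟨x, hx, y, hy, hxy, hxA, hyB⟩
        exact (Finset.mem_sdiff.mp (hsub hy)).2 hyB
      · refine ⟨⟨fun z hz => Finset.mem_union.mpr (Or.inr (Finset.mem_sdiff.mp (hsub hz)).1), hcard⟩, ?_⟩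
        rintro ⟨x, hx, y, hy, hxy, hxA, hyB⟩
        exact (Finset.mem_sdiff.mp (hsub hx)).2 hxA
  have hdisj : Disjoint ((A \ B).powersetCard 2) ((B \ A).powersetCard 2) := by
    rw [Finset.disjoint_left]
    intro s h1 h2
    rw [Finset.mem_powersetCard] at h1 h2
    obtain ⟨x, hx⟩ := Finset.card_pos.mp (by omega : 0 < s.card)
    have := Finset.mem_sdiff.mp (h1.1 hx)
    have := Finset.mem_sdiff.mp (h2.1 hx)
    tauto
  have hkey := Finset.card_filter_add_card_filter_not
    (s := (A ∪ B).powersetCard 2) (p := P)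
  rw [hneg, Finset.card_union_of_disjoint hdisj] at hkey
  rw [Finset.card_powersetCard, Finset.card_powersetCard, Finset.card_powersetCard] at hkey
  have hcardU : (A ∪ B).card = (A \ B).card + (B \ A).card + (A ∩ B).card := by
    have h1 := Finset.card_sdiff_add_card_inter A B
    have h2 := Finset.card_sdiff_add_card_inter B A
    have h3 := Finset.card_union_add_card_inter A B
    rw [Finset.inter_comm] at h2
    omega
  rw [hcardU] at hkey
  rw [choose_two_add, choose_two_add, add_mul] at hkey
  simp only [hP] at hkey
  omega
end
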